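/- arXiv:1810.09469 — 4 statements merged into one kernel-verified Lean document; each statement's English description precedes it below -/
import Mathlib

section
/- Let p be a prime, and let X, Z be the shift and clock matrices in Matrix (ZMod p) (ZMod p) ℂ. The family of p² generalized Pauli matrices indexed by (a, b) ∈ ZMod p × ZMod p and given by (a, b) ↦ X^{a.val} · Z^{b.val} is linearly independent over ℂ. -/
/-- The family of `p²` generalized Pauli matrices
`(a, b) ↦ X^{a.val} · Z^{b.val}` is linearly independent over `ℂ`. -/
theorem pauli_linearIndependent (p : ℕ) [Fact p.Prime]
    (ω : ℂ) (hω : ω = Complex.exp (2 * Real.pi * Complex.I / p))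
    (X Z : Matrix (ZMod p) (ZMod p) ℂ)
    (hX : ∀ i j : ZMod p, X i j = if i = j + 1 then 1 else 0)
    (hZ : ∀ i j : ZMod p, Z i j = if i = j then ω ^ i.val else 0) :
    LinearIndependent ℂ
      (fun ab : ZMod p × ZMod p => X ^ ab.1.val * Z ^ ab.2.val) := by
  have hp : p.Prime := Fact.out
  haveI : NeZero p := ⟨hp.ne_zero⟩
  have hprim : IsPrimitiveRoot ω p := by
    rw [hω]; exact Complex.isPrimitiveRoot_exp p hp.ne_zero
  have hωp : ω ^ p = 1 := hprim.pow_eq_one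
  have hmod : ∀ n : ℕ, ω ^ (n % p) = ω ^ n := by
    intro n
    conv_rhs => rw [← Nat.mod_add_div n p]
    rw [pow_add, pow_mul, hωp, one_pow, mul_one]
  have hadd : ∀ c d : ZMod p, ω ^ c.val * ω ^ d.val = ω ^ ((c + d).val) := by
    intro c d
    rw [← pow_add, ZMod.val_add, hmod]
  have hval : ∀ c j : ZMod p, (ω ^ j.val) ^ c.val = ω ^ ((c * j).val) := by
    intro c j
    rw [← pow_mul, ZMod.val_mul, hmod]
    exact congrArg _ (mul_comm _ _)
  -- sum of all powers is zero
  have hS : ∑ j : ZMod p, ω ^ j.val = 0 := by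
    have hne : ω ≠ 1 := hprim.ne_one hp.one_lt
    have h1 : ω * ∑ j : ZMod p, ω ^ j.val = ∑ j : ZMod p, ω ^ j.val := by
      rw [Finset.mul_sum]
      refine Fintype.sum_bijective (fun j : ZMod p => j + 1)
        (Equiv.addRight (1 : ZMod p)).bijective _ _ fun j => ?_
      have : ω ^ ((j + 1).val) = ω ^ (j.val + 1) := by
        rw [ZMod.val_add, ZMod.val_one, hmod]
      rw [this, pow_succ, mul_comm]
    have h2 : (ω - 1) * ∑ j : ZMod p, ω ^ j.val = 0 := by
      rw [sub_mul, one_mul, h1, sub_self]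
    rcases mul_eq_zero.mp h2 with h | h
    · exact absurd (sub_eq_zero.mp h) hne
    · exact h
  -- orthogonality
  have horth : ∀ c : ZMod p, (∑ j : ZMod p, ω ^ ((c * j).val)) = if c = 0 then (p : ℂ) else 0 := by
    intro c
    by_cases hc : c = 0
    · simp [hc]
    · rw [if_neg hc]
      have := Fintype.sum_bijective (fun j : ZMod p => c * j)
        (mulLeft_bijective₀ c hc) (fun j => ω ^ ((c * j).val)) (fun j => ω ^ j.val)
        (fun j => rfl)
      rw [this, hS]
  -- entry formulas
  have hXpow : ∀ (m : ℕ) (i j : ZMod p),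
      (X ^ m) i j = if i = j + (m : ZMod p) then 1 else 0 := by
    intro m
    induction m with
    | zero => intro i j; simp [Matrix.one_apply, eq_comm]
    | succ m ih =>
      intro i j
      rw [pow_succ, Matrix.mul_apply]
      have key : ∀ k : ZMod p, (X ^ m) i k * X k j
          = if k = j + 1 then (if i = k + (m : ZMod p) then (1:ℂ) else 0) else 0 := by
        intro k
        rw [ih, hX]
        split_ifs <;> simp
      rw [Finset.sum_congr rfl fun k _ => key k, Finset.sum_ite_eq' Finset.univ (j + 1)]
      simp only [Finset.mem_univ, if_true]
      have : j + 1 + (m : ZMod p) = j + ((m + 1 : ℕ) : ZMod p) := by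
        push_cast; ring
      rw [this]
  have hZdiag : Z = Matrix.diagonal fun i => ω ^ i.val := by
    ext i j
    rw [hZ, Matrix.diagonal_apply]
  have hEntry : ∀ (m n : ℕ) (i j : ZMod p),
      (X ^ m * Z ^ n) i j = (if i = j + (m : ZMod p) then 1 else 0) * (ω ^ j.val) ^ n := by
    intro m n i j
    rw [hZdiag, Matrix.diagonal_pow, Matrix.mul_diagonal, hXpow]
    rfl
  rw [Fintype.linearIndependent_iff]
  intro g hg ab
  obtain ⟨a, b⟩ := ab
  have h1 : ∀ j : ZMod p, ∑ b' : ZMod p, g (a, b') * (ω ^ j.val) ^ b'.val = 0 := by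
    intro j
    have h := congrFun (congrFun hg (j + a)) j
    rw [Matrix.sum_apply] at h
    simp only [Matrix.smul_apply, hEntry, smul_eq_mul, Matrix.zero_apply] at h
    rw [Fintype.sum_prod_type] at h
    have key : ∀ a' : ZMod p, (∑ b' : ZMod p,
        g (a', b') * ((if (j + a : ZMod p) = j + ((a'.val : ℕ) : ZMod p) then (1:ℂ) else 0)
          * (ω ^ j.val) ^ b'.val))
        = if a' = a then ∑ b' : ZMod p, g (a', b') * (ω ^ j.val) ^ b'.val else 0 := by
      intro a'
      have hc : ((a'.val : ℕ) : ZMod p) = a' := by simp [ZMod.natCast_val, ZMod.cast_id]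
      rw [hc]
      by_cases ha : a' = a
      · subst ha; simp
      · have : ¬ (j + a = j + a') := by
          intro hh
          exact ha (by simpa using (add_left_cancel hh).symm)
        simp [this, ha]
    rw [Finset.sum_congr rfl fun a' _ => key a', Finset.sum_ite_eq' Finset.univ a] at h
    simpa using h
  have h2 : ∀ j : ZMod p, ∑ b' : ZMod p, g (a, b') * ω ^ ((b' * j).val) = 0 := by
    intro j
    have := h1 j
    simpa only [hval] using this
  have h3 : ∑ b' : ZMod p, g (a, b') * ∑ j : ZMod p, ω ^ (((b' - b) * j).val) = 0 := by
    calc ∑ b' : ZMod p, g (a, b') * ∑ j : ZMod p, ω ^ (((b' - b) * j).val)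
        = ∑ b' : ZMod p, ∑ j : ZMod p,
            g (a, b') * ω ^ ((b' * j).val) * ω ^ (((-b) * j).val) := by
          refine Finset.sum_congr rfl fun b' _ => ?_
          rw [Finset.mul_sum]
          refine Finset.sum_congr rfl fun j _ => ?_
          rw [mul_assoc, hadd]
          have hh : b' * j + (-b) * j = (b' - b) * j := by ring
          rw [hh]
      _ = ∑ j : ZMod p, ∑ b' : ZMod p,
            g (a, b') * ω ^ ((b' * j).val) * ω ^ (((-b) * j).val) := Finset.sum_comm
      _ = 0 := by
          refine Finset.sum_eq_zero fun j _ => ?_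
          rw [← Finset.sum_mul, h2 j, zero_mul]
  have h4 : g (a, b) * (p : ℂ) = 0 := by
    have key : ∀ b' : ZMod p, g (a, b') * ∑ j : ZMod p, ω ^ (((b' - b) * j).val)
        = if b' = b then g (a, b') * (p : ℂ) else 0 := by
      intro b'
      rw [horth]
      by_cases hb : b' = b
      · simp [hb]
      · simp [sub_eq_zero, hb]
    rw [Finset.sum_congr rfl fun b' _ => key b', Finset.sum_ite_eq' Finset.univ b] at h3
    simpa using h3
  have hpC : (p : ℂ) ≠ 0 := Nat.cast_ne_zero.mpr hp.ne_zero
  exact (mul_eq_zero.mp h4).resolve_right hpC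
end

section
/- Let p be a prime, c ∈ ZMod p with c ≠ 0, and let X, Z be the shift and clock matrices in Matrix (ZMod p) (ZMod p) ℂ. Define M_c : ZMod p × ZMod p → Matrix (ZMod p) (ZMod p) ℂ by M_c(g, h) = X^{(c·g).val} · Z^{h.val}. Then M_c(g₀, h₀) · M_c(g₁, h₁) = ω^{(c·h₀·g₁).val} · M_c(g₀ + g₁, h₀ + h₁) for all g₀, h₀, g₁, h₁ ∈ ZMod p, and the family (g, h) ↦ M_c(g, h) is a ℂ-basis of Matrix (ZMod p) (ZMod p) ℂ. (Hence the twisted group algebra of ZMod p × ZMod p with 2-cocycle ω^{c·h₀·g₁} is isomorphic to the p × p matrix algebra.) -/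
/-- For `c ≠ 0` in `ZMod p`, the matrices
`M_c(g, h) = X^{(c·g).val} · Z^{h.val}` satisfy the twisted multiplication rule
`M_c(g₀,h₀) · M_c(g₁,h₁) = ω^{(c·h₀·g₁).val} • M_c(g₀+g₁, h₀+h₁)` and form a
`ℂ`-basis of the `p × p` matrix algebra (so the twisted group algebra of
`ZMod p × ZMod p` with 2-cocycle `ω^{c·h₀·g₁}` is the matrix algebra). -/
theorem twisted_group_algebra_matrix (p : ℕ) [Fact p.Prime]
    (c : ZMod p) (hc : c ≠ 0)
    (ω : ℂ) (hω : ω = Complex.exp (2 * Real.pi * Complex.I / p))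
    (X Z : Matrix (ZMod p) (ZMod p) ℂ)
    (hX : ∀ i j : ZMod p, X i j = if i = j + 1 then 1 else 0)
    (hZ : ∀ i j : ZMod p, Z i j = if i = j then ω ^ i.val else 0)
    (M : ZMod p × ZMod p → Matrix (ZMod p) (ZMod p) ℂ)
    (hM : ∀ gh : ZMod p × ZMod p, M gh = X ^ (c * gh.1).val * Z ^ gh.2.val) :
    (∀ g₀ h₀ g₁ h₁ : ZMod p,
        M (g₀, h₀) * M (g₁, h₁) = ω ^ (c * h₀ * g₁).val • M (g₀ + g₁, h₀ + h₁)) ∧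
      LinearIndependent ℂ M ∧
      Submodule.span ℂ (Set.range M) = ⊤ := by
  classical
  have hp : p.Prime := Fact.out
  have hp0 : p ≠ 0 := hp.ne_zero
  have hprim : IsPrimitiveRoot ω p := by
    rw [hω]; exact Complex.isPrimitiveRoot_exp p hp0
  have hωp : ω ^ p = 1 := hprim.pow_eq_one
  set ζ : ZMod p → ℂ := fun a => ω ^ a.val with hζdef
  have hcast : ∀ n : ℕ, ω ^ n = ζ (n : ZMod p) := by
    intro n
    have : ζ (n : ZMod p) = ω ^ (n % p) := by
      simp only [hζdef, ZMod.val_natCast]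
    rw [this]
    conv_lhs => rw [← Nat.div_add_mod n p]
    rw [pow_add, pow_mul, hωp, one_pow, one_mul]
  have hζval : ∀ a : ZMod p, ζ ((a.val : ZMod p)) = ζ a := by
    intro a; rw [ZMod.natCast_val, ZMod.cast_id]
  have hζadd : ∀ a b : ZMod p, ζ (a + b) = ζ a * ζ b := by
    intro a b
    have : ζ a * ζ b = ω ^ (a.val + b.val) := by rw [pow_add]
    rw [this, hcast]
    push_cast
    rw [ZMod.natCast_val, ZMod.natCast_val, ZMod.cast_id, ZMod.cast_id]
  have hζ0 : ζ 0 = 1 := by simp [hζdef]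
  -- entries of powers
  have hXpow : ∀ (n : ℕ) (i j : ZMod p), (X ^ n) i j = if i = j + (n : ZMod p) then 1 else 0 := by
    intro n
    induction n with
    | zero => intro i j; simp [Matrix.one_apply, eq_comm]
    | succ n ih =>
      intro i j
      rw [pow_succ, Matrix.mul_apply]
      have : ∀ k : ZMod p, (X ^ n) i k * X k j =
          if k = j + 1 then (X ^ n) i k else 0 := by
        intro k; rw [hX]; split <;> simp
      simp only [this]
      rw [Finset.sum_ite_eq' Finset.univ (j + 1) fun k => (X ^ n) i k]
      simp only [Finset.mem_univ, if_true]
      rw [ih]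
      push_cast
      ring_nf
  have hZpow : ∀ (n : ℕ) (i j : ZMod p), (Z ^ n) i j = if i = j then ω ^ (n * j.val) else 0 := by
    intro n
    induction n with
    | zero => intro i j; simp [Matrix.one_apply]
    | succ n ih =>
      intro i j
      rw [pow_succ, Matrix.mul_apply]
      have : ∀ k : ZMod p, (Z ^ n) i k * Z k j =
          if k = j then (Z ^ n) i k * ω ^ j.val else 0 := by
        intro k; rw [hZ]; split
        · subst k; simp
        · simp
      simp only [this]
      rw [Finset.sum_ite_eq' Finset.univ j fun k => (Z ^ n) i k * ω ^ j.val]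
      simp only [Finset.mem_univ, if_true]
      rw [ih]
      split
      · rw [← pow_add]; ring_nf
      · simp
  -- entries of M
  have hMe : ∀ (g h i j : ZMod p), M (g, h) i j = if i = j + c * g then ζ (h * j) else 0 := by
    intro g h i j
    rw [hM (g, h), Matrix.mul_apply]
    have : ∀ k : ZMod p, (X ^ (c * g).val) i k * (Z ^ h.val) k j =
        if k = j then (X ^ (c * g).val) i k * ω ^ (h.val * j.val) else 0 := by
      intro k; rw [hZpow]; split <;> simp
    simp only [this]
    rw [Finset.sum_ite_eq' Finset.univ j fun k => (X ^ (c * g).val) i k * ω ^ (h.val * j.val)]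
    simp only [Finset.mem_univ, if_true]
    rw [hXpow, ZMod.natCast_val, ZMod.cast_id]
    have hval : ω ^ (h.val * j.val) = ζ (h * j) := by
      rw [hcast]; push_cast
      rw [ZMod.natCast_val, ZMod.natCast_val, ZMod.cast_id, ZMod.cast_id]
    rw [hval]
    split <;> simp
  -- multiplication rule
  have hmul : ∀ g₀ h₀ g₁ h₁ : ZMod p,
      M (g₀, h₀) * M (g₁, h₁) = ω ^ (c * h₀ * g₁).val • M (g₀ + g₁, h₀ + h₁) := by
    intro g₀ h₀ g₁ h₁
    have hfac : ω ^ (c * h₀ * g₁).val = ζ (c * h₀ * g₁) := rfl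
    ext i j
    rw [Matrix.mul_apply, Matrix.smul_apply, hMe, smul_eq_mul, hfac]
    have key : ∀ k : ZMod p, M (g₀, h₀) i k * M (g₁, h₁) k j =
        if k = j + c * g₁ then M (g₀, h₀) i k * ζ (h₁ * j) else 0 := by
      intro k; rw [hMe g₁ h₁ k j]; split <;> simp
    simp only [key]
    rw [Finset.sum_ite_eq' Finset.univ (j + c * g₁) fun k => M (g₀, h₀) i k * ζ (h₁ * j)]
    simp only [Finset.mem_univ, if_true]
    rw [hMe]
    have hcond : (i = j + c * g₁ + c * g₀) ↔ (i = j + c * (g₀ + g₁)) := by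
      constructor <;> (intro h; rw [h]; ring)
    split
    · rename_i h1
      rw [if_pos (hcond.mp h1)]
      have e1 : h₀ * (j + c * g₁) = h₀ * j + c * h₀ * g₁ := by ring
      have e2 : (h₀ + h₁) * j = h₀ * j + h₁ * j := by ring
      rw [e1, e2, hζadd, hζadd]
      ring
    · rename_i h1
      rw [if_neg (fun h => h1 (hcond.mpr h))]
      ring
  -- geometric sum
  have hgeom : ∀ e : ZMod p, (∑ j : ZMod p, ζ (e * j)) = if e = 0 then (p : ℂ) else 0 := by
    intro e
    split
    · rename_i he
      subst he
      simp only [zero_mul, hζ0]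
      simp [ZMod.card]
    · rename_i he
      have hsum0 : ∑ i ∈ Finset.range p, ω ^ i = 0 := hprim.geom_sum_eq_zero hp.one_lt
      have hbij : ∑ j : ZMod p, ζ (e * j) = ∑ j : ZMod p, ζ j := by
        apply Finset.sum_nbij' (i := fun j => e * j) (j := fun j => e⁻¹ * j)
        · intros; exact Finset.mem_univ _
        · intros; exact Finset.mem_univ _
        · intro a _; field_simp
        · intro a _; field_simp
        · intros; rfl
      rw [hbij]
      have : ∑ j : ZMod p, ζ j = ∑ i ∈ Finset.range p, ω ^ i := by
        apply Finset.sum_nbij' (i := fun j : ZMod p => j.val) (j := fun n : ℕ => (n : ZMod p))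
        · intro a _; exact Finset.mem_range.mpr (ZMod.val_lt a)
        · intro a ha; exact Finset.mem_univ _
        · intro a _; rw [ZMod.natCast_val, ZMod.cast_id]
        · intro a ha; rw [ZMod.val_natCast_of_lt (Finset.mem_range.mp ha)]
        · intros; rfl
      rw [this, hsum0]
  -- span
  have hspan : Submodule.span ℂ (Set.range M) = ⊤ := by
    rw [eq_top_iff]
    intro A _
    rw [Matrix.matrix_eq_sum_single A]
    apply Submodule.sum_mem; intro i _
    apply Submodule.sum_mem; intro j _
    have hsb : ∀ i' j', Matrix.single i j (1 : ℂ) i' j' =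
        if i' = i ∧ j' = j then 1 else 0 := by
      intro i' j'
      simp only [Matrix.single, Matrix.of_apply]
      exact if_congr ⟨fun ⟨a, b⟩ => ⟨a.symm, b.symm⟩, fun ⟨a, b⟩ => ⟨a.symm, b.symm⟩⟩ rfl rfl
    have hsm : Matrix.single i j (A i j) = A i j • Matrix.single i j (1 : ℂ) := by
      ext i' j'
      rw [Matrix.smul_apply, hsb, smul_eq_mul]
      simp only [Matrix.single, Matrix.of_apply]
      by_cases h : i = i' ∧ j = j'
      · rw [if_pos h, if_pos ⟨h.1.symm, h.2.symm⟩, mul_one]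
      · rw [if_neg h, if_neg (fun h' => h ⟨h'.1.symm, h'.2.symm⟩), mul_zero]
    rw [hsm]
    apply Submodule.smul_mem
    -- key identity
    have key : (∑ h : ZMod p, ζ (-(h * j)) • M (c⁻¹ * (i - j), h))
        = (p : ℂ) • Matrix.single i j (1 : ℂ) := by
      have hcg : c * (c⁻¹ * (i - j)) = i - j := by field_simp
      ext i' j'
      rw [Matrix.smul_apply, Matrix.sum_apply]
      simp only [Matrix.smul_apply, hMe, hcg, smul_eq_mul]
      rw [hsb]
      by_cases h1 : i' = j' + (i - j)
      · rw [Finset.sum_congr rfl (fun x _ => by rw [if_pos h1])]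
        have hterm : ∀ x : ZMod p, ζ (-(x * j)) * ζ (x * j') = ζ ((j' - j) * x) := by
          intro x; rw [← hζadd]; congr 1; ring
        rw [Finset.sum_congr rfl fun x _ => hterm x, hgeom]
        by_cases h2 : j' = j
        · have hij : i' = i := by rw [h1, h2]; ring
          rw [if_pos (by rw [h2]; ring), if_pos ⟨hij, h2⟩, mul_one]
        · rw [if_neg (sub_ne_zero.mpr h2), if_neg (fun h => h2 h.2), mul_zero]
      · rw [Finset.sum_congr rfl (fun x _ => by rw [if_neg h1])]
        simp only [mul_zero, Finset.sum_const_zero]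
        have hni : ¬(i' = i ∧ j' = j) := by
          rintro ⟨hi, hj⟩; exact h1 (by rw [hi, hj]; ring)
        rw [if_neg hni, mul_zero]
    have hEin : Matrix.single i j (1 : ℂ) =
        (p : ℂ)⁻¹ • ∑ h : ZMod p, ζ (-(h * j)) • M (c⁻¹ * (i - j), h) := by
      rw [key, smul_smul, inv_mul_cancel₀ (by exact_mod_cast hp0), one_smul]
    rw [hEin]
    apply Submodule.smul_mem
    apply Submodule.sum_mem
    intro h _
    apply Submodule.smul_mem
    exact Submodule.subset_span ⟨(c⁻¹ * (i - j), h), rfl⟩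
  -- linear independence
  have hcard : Fintype.card (ZMod p × ZMod p) = Module.finrank ℂ (Matrix (ZMod p) (ZMod p) ℂ) := by
    rw [Module.finrank_matrix, Fintype.card_prod, ZMod.card, Module.finrank_self]
    ring
  have hli : LinearIndependent ℂ M :=
    linearIndependent_of_top_le_span_of_card_eq_finrank (le_of_eq hspan.symm) hcard
  exact ⟨hmul, hli, hspan⟩
end

section
/- Let p be a prime and c ∈ ZMod p with c ≠ 0. Then there is no function β : ZMod p × ZMod p → ℂ with β(u) ≠ 0 for all u such that β(u + v) = β(u) · β(v) · ω^{(c·u₂·v₁).val} for all u = (u₁, u₂) and v = (v₁, v₂) in ZMod p × ZMod p. In other words, the 2-cocycle ((g₀,h₀),(g₁,h₁)) ↦ ω^{c·h₀·g₁} on the group ZMod p × ZMod p is not a coboundary (it is a nontrivial 2-cocycle). -/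
/-- For a prime `p` and `c ≠ 0` in `ZMod p`, the 2-cocycle
`((g₀,h₀),(g₁,h₁)) ↦ ω^{(c·h₀·g₁).val}` on `ZMod p × ZMod p` is not a
coboundary: no nowhere-vanishing `β : ZMod p × ZMod p → ℂ` trivializes it. -/
theorem cocycle_nontrivial (p : ℕ) (hp : p.Prime)
    (c : ZMod p) (hc : c ≠ 0)
    (ω : ℂ) (hω : ω = Complex.exp (2 * Real.pi * Complex.I / p)) :
    ¬ ∃ β : ZMod p × ZMod p → ℂ, (∀ u, β u ≠ 0) ∧
        ∀ u v : ZMod p × ZMod p,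
          β (u + v) = β u * β v * ω ^ (c * u.2 * v.1).val := by
  rintro ⟨β, hne, hβ⟩
  have hprim : IsPrimitiveRoot ω p := by
    rw [hω]; exact Complex.isPrimitiveRoot_exp p hp.ne_zero
  have h1 := hβ ((0 : ZMod p), (1 : ZMod p)) ((1 : ZMod p), (0 : ZMod p))
  have h2 := hβ ((1 : ZMod p), (0 : ZMod p)) ((0 : ZMod p), (1 : ZMod p))
  simp only [Prod.mk_add_mk, add_zero, zero_add, mul_one, mul_zero,
    ZMod.val_zero, pow_zero] at h1 h2
  have hω1 : ω ^ c.val = 1 := by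
    have hb1 := hne ((0 : ZMod p), (1 : ZMod p))
    have hb2 := hne ((1 : ZMod p), (0 : ZMod p))
    have key : β (0,1) * β (1,0) * ω ^ c.val = β (0,1) * β (1,0) * 1 := by
      rw [mul_one]
      rw [← h1, h2]; ring
    exact mul_left_cancel₀ (mul_ne_zero hb1 hb2) key
  haveI : NeZero p := ⟨hp.ne_zero⟩
  have hdvd := (hprim.pow_eq_one_iff_dvd c.val).mp hω1
  have hlt : c.val < p := ZMod.val_lt c
  have hpos : 0 < c.val := Nat.pos_of_ne_zero (fun h => hc (by
    have := (ZMod.val_eq_zero c).mp h; exact this))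
  have := Nat.le_of_dvd hpos hdvd
  omega
end

section
/- Let p be an odd prime, A an associative unital ℂ-algebra, a ∈ ZMod p, and M : ZMod p → A a map with M(0) = 1 and M(g) · M(h) = ω^{(a·g·h).val} • M(g + h) for all g, h ∈ ZMod p (a projective representation of ZMod p with 2-cocycle ω^{a·g·h}). For each x ∈ ZMod p set e_x = (1/p) • ∑_{g ∈ ZMod p} Θ_{x,a}(g) • M(g). Then the elements (e_x)_{x ∈ ZMod p} form a complete family of orthogonal idempotents: e_x · e_x = e_x for all x, e_x · e_y = 0 whenever x ≠ y, and ∑_{x ∈ ZMod p} e_x = 1. -/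
/-!
Write `θ_x(g) = ψ(g x + a g²/2)` for the primitive character `ψ(m) = ω^m`. Multiplying out `e_x e_y`
with the cocycle relation and collecting the terms with `g + h = k`, completing the square gives
`θ_x(g) θ_y(k - g) ψ(a g (k - g)) = ψ(g (x - y)) θ_y(k)`, so `e_x e_y` is `e_y` scaled by the
character sum `(1/p) ∑_g ψ(g (x - y))`, which vanishes for `x ≠ y`. Similarly `∑_x e_x` collapses,
through `∑_x ψ(g x) = p [g = 0]`, to the single term `M 0 = 1`. Idempotence then follows from
orthogonality and completeness.
-/

open Finset

lemma sum_smul_mul_sum_smul_of_cocycle {G K A : Type*} [AddCommGroup G] [Fintype G]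
    [CommSemiring K] [Semiring A] [Algebra K A] {σ : G → G → K} {M : G → A}
    (hM : ∀ g h, M g * M h = σ g h • M (g + h)) (c d : G → K) :
    (∑ g, c g • M g) * (∑ h, d h • M h) =
      ∑ k, (∑ g, c g * d (k - g) * σ g (k - g)) • M k := by
  simp_rw [sum_mul_sum, sum_smul]
  conv_rhs => rw [sum_comm]
  refine sum_congr rfl fun g _ => ?_
  rw [← (Equiv.subRight g).sum_comp]
  refine sum_congr rfl fun k _ => ?_
  rw [Equiv.subRight_apply, smul_mul_smul_comm, hM, smul_smul, add_sub_cancel]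

namespace AddChar

variable {F K A : Type*} [Field F] [Field K]

def theta (ψ : AddChar F K) (a x g : F) : K := ψ (g * x + a * g * g * 2⁻¹)

lemma theta_mul_theta_mul {ψ : AddChar F K} {a : F} (h2 : (2 : F) ≠ 0) (x y g k : F) :
    ψ.theta a x g * ψ.theta a y (k - g) * ψ (a * g * (k - g)) =
      ψ (g * (x - y)) * ψ.theta a y k := by
  simp only [theta, ← map_add_eq_mul]
  congr 1
  field_simp
  ring

variable [Fintype F] [Ring A] [Algebra K A]

def thetaIdempotent (ψ : AddChar F K) (a : F) (M : F → A) (x : F) : A :=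
  (Fintype.card F : K)⁻¹ • ∑ g, ψ.theta a x g • M g

variable {ψ : AddChar F K} {a : F} {M : F → A}

lemma thetaIdempotent_mul (h2 : (2 : F) ≠ 0)
    (hM : ∀ g h, M g * M h = ψ (a * g * h) • M (g + h)) (x y : F) :
    ψ.thetaIdempotent a M x * ψ.thetaIdempotent a M y =
      ((Fintype.card F : K)⁻¹ * ∑ g, ψ (g * (x - y))) • ψ.thetaIdempotent a M y := by
  rw [thetaIdempotent, thetaIdempotent, smul_mul_smul_comm, sum_smul_mul_sum_smul_of_cocycle hM]
  simp only [theta_mul_theta_mul h2, ← sum_mul, smul_sum, smul_smul]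
  refine sum_congr rfl fun k _ => ?_
  congr 1
  ring

lemma thetaIdempotent_mul_of_ne (hψ : ψ.IsPrimitive) (h2 : (2 : F) ≠ 0)
    (hM : ∀ g h, M g * M h = ψ (a * g * h) • M (g + h)) {x y : F} (hxy : x ≠ y) :
    ψ.thetaIdempotent a M x * ψ.thetaIdempotent a M y = 0 := by
  classical
  rw [thetaIdempotent_mul h2 hM, sum_mulShift _ hψ, if_neg (sub_ne_zero.mpr hxy), Nat.cast_zero,
    mul_zero, zero_smul]

lemma sum_theta [DecidableEq F] (hψ : ψ.IsPrimitive) (g : F) :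
    ∑ x, ψ.theta a x g = if g = 0 then (Fintype.card F : K) else 0 := by
  simp_rw [theta, mul_comm g, map_add_eq_mul, ← sum_mul, sum_mulShift _ hψ]
  split_ifs with hg <;> simp [hg]

lemma sum_thetaIdempotent [CharZero K] (hψ : ψ.IsPrimitive) (hM0 : M 0 = 1) :
    ∑ x, ψ.thetaIdempotent a M x = 1 := by
  classical
  simp only [thetaIdempotent, ← smul_sum]
  rw [sum_comm]
  simp only [← sum_smul, sum_theta hψ, ite_smul, zero_smul, sum_ite_eq', mem_univ, if_true, hM0,
    smul_smul]
  rw [inv_mul_cancel₀ (Nat.cast_ne_zero.mpr Fintype.card_ne_zero), one_smul]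

theorem completeOrthogonalIdempotents_thetaIdempotent [CharZero K] (hψ : ψ.IsPrimitive)
    (h2 : (2 : F) ≠ 0) (hM0 : M 0 = 1) (hM : ∀ g h, M g * M h = ψ (a * g * h) • M (g + h)) :
    CompleteOrthogonalIdempotents (ψ.thetaIdempotent a M) :=
  CompleteOrthogonalIdempotents.iff_ortho_complete.mpr
    ⟨fun _ _ hxy => thetaIdempotent_mul_of_ne hψ h2 hM hxy, sum_thetaIdempotent hψ hM0⟩

end AddChar

lemma ZMod.pow_val_eq_stdAddChar {N : ℕ} [NeZero N] {ω : ℂ}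
    (hω : ω = Complex.exp (2 * Real.pi * Complex.I / N)) (m : ZMod N) :
    ω ^ m.val = ZMod.stdAddChar m := by
  rw [ZMod.stdAddChar_apply, ZMod.toCircle_apply, hω, ← Complex.exp_nat_mul]
  ring_nf

/-- Let `p` be an odd prime, `A` an associative unital `ℂ`-algebra,
and `M : ZMod p → A` a projective representation with 2-cocycle `ω^{a·g·h}`
(`M 0 = 1`, `M g · M h = ω^{(a·g·h).val} • M (g+h)`). Then the elements
`e_x = (1/p) • ∑_g Θ_{x,a}(g) • M g`, with
`Θ_{x,a}(g) = ω^{(g·x + a·g·g·2⁻¹).val}`, form a complete family of orthogonal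
idempotents. -/
theorem projective_rep_idempotents_odd (p : ℕ) [Fact p.Prime] (hodd : Odd p)
    (ω : ℂ) (hω : ω = Complex.exp (2 * Real.pi * Complex.I / p))
    (A : Type*) [Ring A] [Algebra ℂ A]
    (a : ZMod p) (M : ZMod p → A)
    (hM0 : M 0 = 1)
    (hMmul : ∀ g h : ZMod p, M g * M h = (ω ^ (a * g * h).val) • M (g + h))
    (e : ZMod p → A)
    (he : ∀ x : ZMod p,
      e x = ((1 : ℂ) / p) •
        ∑ g : ZMod p, (ω ^ (g * x + a * g * g * 2⁻¹).val) • M g) :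
    (∀ x : ZMod p, e x * e x = e x) ∧
      (∀ x y : ZMod p, x ≠ y → e x * e y = 0) ∧
      (∑ x : ZMod p, e x) = 1 := by
  simp only [ZMod.pow_val_eq_stdAddChar hω] at hMmul he
  have h2 : (2 : ZMod p) ≠ 0 := Ring.two_ne_zero <| by
    rw [ZMod.ringChar_zmod_n]
    rintro rfl
    exact Nat.not_odd_iff_even.mpr even_two hodd
  have he' : e = ZMod.stdAddChar.thetaIdempotent a M := by
    funext x
    rw [he, AddChar.thetaIdempotent, ZMod.card, one_div]
    rfl
  obtain ⟨⟨idem, ortho⟩, complete⟩ := he' ▸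
    AddChar.completeOrthogonalIdempotents_thetaIdempotent (ZMod.isPrimitive_stdAddChar p) h2 hM0
      hMmul
  exact ⟨fun x => idem x, fun _ _ hxy => ortho hxy, complete⟩
end
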